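/- Let t be a standard Young-Fibonacci tableau of size n. Then the set of linear extensions of the canonical poset P_t is exactly the interval [min(t), max(t)] of the weak order on S_n: a permutation σ of {1,…,n} is a linear extension of P_t if and only if min(t) ≤ σ ≤ max(t) in the weak order. -/

import Mathlib

/-- A snakeshape: a composition all of whose parts equal 1 or 2, recorded as the
list of column heights, read left to right. -/
def IsSnakeshape (u : List ℕ) : Prop := ∀ p ∈ u, p = 1 ∨ p = 2

/-- The shape (list of column heights, left to right) of a tableau given as a
list of columns, each column listed top to bottom. -/
def shapeOf (t : List (List ℕ)) : List ℕ := t.map List.length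

/-- `t` is a standard Young–Fibonacci tableau of size `n`: columns are listed left
to right, each column top to bottom; every column has height 1 or 2; in each
column the top entry exceeds the bottom entry; every topmost entry exceeds all
entries in columns strictly to its right; and the entries are exactly `1,…,n`. -/
def IsYFT (n : ℕ) (t : List (List ℕ)) : Prop :=
  (∀ c ∈ t, c.length = 1 ∨ c.length = 2) ∧
  (∀ c ∈ t, List.Chain' (fun a b => b < a) c) ∧
  (∀ i j : ℕ, i < j → j < t.length →
    ∀ a ∈ (t.getD i []).head?, ∀ x ∈ t.getD j [], x < a) ∧
  (t.flatten).Perm (List.range' 1 n)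

/-- Auxiliary, fuelled version of the Young–Fibonacci insertion: reading the word
from right to left, each letter read gets matched to the largest not-yet-matched
letter occurring strictly to its left which exceeds it (forming a height-2 column,
larger letter on top), and otherwise stays single (a height-1 column); columns are
listed in the order in which their status was settled. -/
def insertColsAux : ℕ → List ℕ → List (List ℕ)
  | 0, _ => []
  | _, [] => []
  | fuel+1, w =>
    let x := w.getLast!
    let w' := w.dropLast
    match (w'.filter (fun y => decide (x < y))).max? with
    | none => [x] :: insertColsAux fuel w'
    | some m => [m, x] :: insertColsAux fuel (w'.erase m)

/-- The Young–Fibonacci insertion tableau of a word. -/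
def insertCols (w : List ℕ) : List (List ℕ) := insertColsAux w.length w

/-- The word `σ(1)⋯σ(n)` of a permutation of `{1,…,n}` (letters `1,…,n`). -/
def permWord {n : ℕ} (σ : Equiv.Perm (Fin n)) : List ℕ :=
  List.ofFn (fun i => (σ i : ℕ) + 1)

/-- min(t): read the columns right to left, each column top to bottom. -/
def minWord (t : List (List ℕ)) : List ℕ := t.reverse.flatten

/-- max(t): the top row left to right, then the bottom row right to left. -/
def maxWord (t : List (List ℕ)) : List ℕ :=
  (t.filterMap fun c => if c.length = 2 then c.head? else none) ++
    (t.filterMap List.getLast?).reverse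

/-- Number of inversions of a word: pairs of positions `p < q` with `w p > w q`. -/
def invCount (w : List ℕ) : ℕ :=
  ((Finset.range w.length ×ˢ Finset.range w.length).filter
    (fun p => p.1 < p.2 ∧ w.getD p.2 0 < w.getD p.1 0)).card

/-- `w'` is obtained from `w` by swapping two adjacent letters `x < y` (in this
order in `w`), thus creating exactly one more inversion. -/
def AdjSwap (w w' : List ℕ) : Prop :=
  ∃ l r : List ℕ, ∃ x y : ℕ, x < y ∧ w = l ++ x :: y :: r ∧ w' = l ++ y :: x :: r

/-- The (right) weak order on words. -/
def WordWeakLe (w w' : List ℕ) : Prop := Relation.ReflTransGen AdjSwap w w'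

/-- `Shift t t'`: `t'` is obtained from `t` by shifting one entry. Columns are
listed top to bottom, so `[b, a]` is the column with top `b`, bottom `a`. -/
inductive Shift : List (List ℕ) → List (List ℕ) → Prop
  /-- the bottom entry `a` of a height-2 column bumps up the single entry `c` of
  the column on its left; the top entry `b` falls down. -/
  | bump2 (l r : List (List ℕ)) (c b a : ℕ) :
      Shift (l ++ [[c], [b, a]] ++ r) (l ++ [[c, a], [b]] ++ r)
  /-- the entry `a` of a height-1 column bumps up the single entry `c` of the
  column on its left; its own column disappears. -/
  | bump1 (l r : List (List ℕ)) (c a : ℕ) :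
      Shift (l ++ [[c], [a]] ++ r) (l ++ [[c, a]] ++ r)
  /-- `a < c` replaces `c` at the bottom of the height-2 column on its left, and
  `c < b` takes the former place of `a`. -/
  | exch (l r : List (List ℕ)) (d c b a : ℕ) (h1 : a < c) (h2 : c < b) :
      Shift (l ++ [[d, c], [b, a]] ++ r) (l ++ [[d, a], [b, c]] ++ r)
  /-- `a < c` replaces `c` at the bottom of the height-2 column on its left; since
  `b < c`, `c` becomes a new height-1 column in between and `b` falls down. -/
  | split2 (l r : List (List ℕ)) (d c b a : ℕ) (h1 : a < c) (h2 : b < c) :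
      Shift (l ++ [[d, c], [b, a]] ++ r) (l ++ [[d, a], [c], [b]] ++ r)
  /-- `a < c` replaces `c` at the bottom of the height-2 column on its left; `c`
  becomes a new height-1 column and the height-1 column of `a` disappears. -/
  | split1 (l r : List (List ℕ)) (d c a : ℕ) (h1 : a < c) :
      Shift (l ++ [[d, c], [a]] ++ r) (l ++ [[d, a], [c]] ++ r)

/-- The bottom row of a tableau, read left to right: the bottom entries of the
height-2 columns together with the entries of the height-1 columns. -/
def bottomRow (t : List (List ℕ)) : List ℕ := t.filterMap List.getLast?

/-- Generating relations of the canonical poset `P_t`: `canoGen t x y` means `x`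
is covered... i.e. `x <_P y` is a generating relation: consecutive bottom-row
entries read right to left (rightmost lowest), and each top entry of a height-2
column below the corresponding bottom entry. -/
def canoGen (t : List (List ℕ)) (x y : ℕ) : Prop :=
  (∃ i : ℕ, i + 1 < (bottomRow t).length ∧
    (bottomRow t).getD (i + 1) 0 = x ∧ (bottomRow t).getD i 0 = y) ∨
  (∃ c ∈ t, c.length = 2 ∧ c.head? = some x ∧ c.getLast? = some y)

/-- `w` is (the word of) a linear extension of the canonical poset `P_t`. -/
def IsLinExt (t : List (List ℕ)) (w : List ℕ) : Prop :=
  ∀ x y : ℕ, Relation.ReflTransGen (canoGen t) x y → x ≠ y →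
    w.idxOf x < w.idxOf y

/-- The set of inversions of a word: pairs `(j, i)` with `i < j` such that `j`
occurs before `i`. -/
def InvSet (w : List ℕ) : Set (ℕ × ℕ) :=
  {p | p.2 < p.1 ∧ p.1 ∈ w ∧ p.2 ∈ w ∧ w.idxOf p.1 < w.idxOf p.2}

/-- The set of non-inversions of a word: pairs `(i, j)` with `i < j` such that `i`
occurs before `j`. -/
def NonInvSet (w : List ℕ) : Set (ℕ × ℕ) :=
  {p | p.1 < p.2 ∧ p.1 ∈ w ∧ p.2 ∈ w ∧ w.idxOf p.1 < w.idxOf p.2}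

/-- The row canonical tableau of shape `u` (size `n`): topmost cells are labelled
`n, n-1, …` from left to right, bottom cells of height-2 columns are labelled
`1, 2, …` from left to right. -/
def rTcols (n : ℕ) (u : List ℕ) : List (List ℕ) :=
  (List.range u.length).map (fun i =>
    if u.getD i 0 = 2 then [n - i, (u.take i).count 2 + 1] else [n - i])

/-- The column canonical tableau of shape `u`: cells are labelled `1, 2, …` taking
columns right to left, in each column the bottom cell before the top cell. -/
def cTcols (u : List ℕ) : List (List ℕ) :=
  (List.range u.length).map (fun i =>
    let s := u.sum - (u.take (i + 1)).sum
    if u.getD i 0 = 2 then [s + 2, s + 1] else [s + 1])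

/-- `t` is a semistandard Young–Fibonacci tableau of shape `u`: entries are
positive integers, in each column the top entry strictly exceeds the bottom one,
and every topmost entry is `≥` all entries in columns strictly to its right. -/
def IsSSYFT (u : List ℕ) (t : List (List ℕ)) : Prop :=
  shapeOf t = u ∧
  (∀ c ∈ t, List.Chain' (fun a b => b < a) c) ∧
  (∀ i j : ℕ, i < j → j < t.length →
    ∀ a ∈ (t.getD i []).head?, ∀ x ∈ t.getD j [], x ≤ a) ∧
  (∀ x ∈ t.flatten, 1 ≤ x)

/-- `t` has content `v`: for each `i`, `t` has exactly `v_i` entries equal to `i`.-/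
def ContentIs (v : List ℕ) (t : List (List ℕ)) : Prop :=
  ∀ i : ℕ, t.flatten.count (i + 1) = v.getD i 0

/-- The Young–Fibonacci number `N_{u,v}`: the number of semistandard
Young–Fibonacci tableaux of shape `u` and content `v`. -/
noncomputable def YFNumber (u v : List ℕ) : ℕ :=
  Nat.card {t : List (List ℕ) // IsSSYFT u t ∧ ContentIs v t}

/-- The multiset (as a list indexed by positions) `v^{1-}`: delete a part equal
to 1, or decrease a larger part by 1. -/
def vMinus (v : List ℕ) : List (List ℕ) :=
  (List.range v.length).map (fun p =>
    if v.getD p 0 = 1 then v.eraseIdx p else v.set p (v.getD p 0 - 1))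

/-- The list of snakeshapes covering `u` in the Young–Fibonacci lattice:
(i) prepend a part 1; (ii) replace the leftmost part equal to 1 by a 2;
(iii) if `u` starts with `k ≥ 1` parts equal to 2, insert a part 1 just after the
`i`-th part, `1 ≤ i ≤ k`. -/
def coversList (u : List ℕ) : List (List ℕ) :=
  [1 :: u] ++
    (if (u.takeWhile (fun p => decide (p = 2))).length < u.length then
      [u.take (u.takeWhile (fun p => decide (p = 2))).length ++
        2 :: u.drop ((u.takeWhile (fun p => decide (p = 2))).length + 1)]
    else []) ++
    ((List.range (u.takeWhile (fun p => decide (p = 2))).length).map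
      (fun i => u.insertIdx (i + 1) 1))

/-- Okada's analogue of the Kostka numbers (fuelled implementation of the
defining recurrences; `v.length` is enough fuel). -/
def OkadaKAux : ℕ → List ℕ → List ℕ → ℕ
  | _, [], [] => 1
  | fuel+1, 1 :: u, 1 :: v => OkadaKAux fuel u v
  | fuel+1, 2 :: u, 2 :: v => OkadaKAux fuel u v
  | _+1, 1 :: _, 2 :: _ => 0
  | fuel+1, 2 :: u, 1 :: v => ((coversList u).map (fun w => OkadaKAux fuel w v)).sum
  | _, _, _ => 0

/-- Okada's analogue `K_{u,v}` of the Kostka numbers, determined by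
`K_{∅,∅} = 1`, `K_{1u,1v} = K_{u,v}`, `K_{2u,2v} = K_{u,v}`, `K_{1u,2v} = 0` and
`K_{2u,1v} = Σ_{w covers u} K_{w,v}`. -/
def OkadaK (u v : List ℕ) : ℕ := OkadaKAux v.length u v

/-- The cells of a snakeshape `u`: pairs `(i, r)` with `i` the (0-based) column
index and `r = 0` for the bottom cell, `r = 1` for the top cell. -/
def cellsFinset (u : List ℕ) : Finset (ℕ × ℕ) :=
  (Finset.range u.length ×ˢ Finset.range 2).filter (fun p => p.2 < u.getD p.1 0)

/-- Generating relations of the poset `P_u` on the cells of `u`: the bottom-row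
cells read right to left form a chain (rightmost lowest), and the top cell of
each height-2 column lies strictly below its bottom cell. -/
def cellGen (u : List ℕ) (c c' : ℕ × ℕ) : Prop :=
  (∃ i : ℕ, i + 1 < u.length ∧ c = (i + 1, 0) ∧ c' = (i, 0)) ∨
  (∃ i : ℕ, i < u.length ∧ u.getD i 0 = 2 ∧ c = (i, 1) ∧ c' = (i, 0))

/-- The order relation of the poset `P_u`. -/
def cellLe (u : List ℕ) (c c' : ℕ × ℕ) : Prop :=
  Relation.ReflTransGen (cellGen u) c c'

/-!
Peeling off the first column `c` of `t = c :: t'`, the poset `P_t` is `P_{t'}` together with the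
top entry of `c`, with the bottom entry of `c` adjoined as a maximum; correspondingly
`min(t) = min(t') c` and `max(t) = top(c) max(t') bottom(c)`. By induction on the columns,
`min(t)` and `max(t)` are linear extensions of `P_t`, and, since a top entry exceeds everything to
its right, every inversion of `min(t)` and every non-inversion of `max(t)` is a relation of `P_t`.
Hence a rearrangement `w` is a linear extension exactly when `Inv(min t) ⊆ Inv(w) ⊆ Inv(max t)`,
and the weak order is inclusion of inversion sets.
-/

open List

namespace List

variable {α : Type*} {x y : α} {l r : List α}

theorem pair_sublist_append_iff :
    [x, y] <+ l ++ r ↔ [x, y] <+ l ∨ (x ∈ l ∧ y ∈ r) ∨ [x, y] <+ r := by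
  constructor
  · rw [sublist_append_iff]
    rintro ⟨_ | ⟨a, _ | ⟨b, _ | _⟩⟩, l₂, h, h₁, h₂⟩
    · simp_all
    · obtain ⟨rfl, rfl⟩ : x = a ∧ [y] = l₂ := by simpa using h
      simp_all
    · simp_all
    · simp at h
  · rintro (h | ⟨hx, hy⟩ | h)
    · exact h.trans (sublist_append_left l r)
    · exact Sublist.append (singleton_sublist.2 hx) (singleton_sublist.2 hy)
    · exact h.trans (sublist_append_right l r)

theorem pair_sublist_or_pair_sublist (hx : x ∈ l) (hy : y ∈ l) (hxy : x ≠ y) :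
    [x, y] <+ l ∨ [y, x] <+ l := by
  induction l with
  | nil => simp at hx
  | cons a l ih =>
    simp only [mem_cons] at hx hy
    rcases hx with rfl | hx
    · exact .inl (cons_sublist_cons.2 (singleton_sublist.2 (hy.resolve_left hxy.symm)))
    rcases hy with rfl | hy
    · exact .inr (cons_sublist_cons.2 (singleton_sublist.2 hx))
    exact (ih hx hy).imp (Sublist.cons a) (Sublist.cons a)

theorem pair_sublist_swap_of_ne {p q : α} (h : [q, p] <+ x :: y :: r) (hne : ¬(q = x ∧ p = y)) :
    [q, p] <+ y :: x :: r := by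
  simp only [sublist_cons_iff, cons.injEq] at h ⊢
  aesop

theorem Nodup.not_pair_sublist_swap (hl : l.Nodup) (h : [x, y] <+ l) : ¬[y, x] <+ l := by
  induction l with
  | nil => simp at h
  | cons a l ih =>
    intro h'
    rw [nodup_cons] at hl
    simp only [sublist_cons_iff, cons.injEq] at h h'
    rcases h with h | ⟨_, ⟨rfl, rfl⟩, -⟩ <;> rcases h' with h' | ⟨_, ⟨rfl, rfl⟩, hx⟩
    · exact ih hl.2 h h'
    · exact hl.1 (h.subset (by simp))
    · exact hl.1 (h'.subset (by simp))
    · exact hl.1 (hx.subset (by simp))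

theorem Nodup.pair_sublist_iff_idxOf_lt [BEq α] [LawfulBEq α] (hl : l.Nodup) (hx : x ∈ l)
    (hy : y ∈ l) : [x, y] <+ l ↔ l.idxOf x < l.idxOf y := by
  induction l with
  | nil => simp at hx
  | cons a l ih =>
    rw [nodup_cons] at hl
    rcases mem_cons.1 hx with rfl | hx' <;> rcases mem_cons.1 hy with rfl | hy'
    · simp [hl.1]
    · have hxy : x ≠ y := fun h => hl.1 (h ▸ hy')
      simp [idxOf_cons_ne _ hxy, hy']
    · have hyx : y ≠ x := fun h => hl.1 (h ▸ hx')
      simp only [idxOf_cons_self, idxOf_cons_ne _ hyx, Nat.not_lt_zero, iff_false]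
      exact fun h => hl.1 (singleton_sublist.1 h.tail)
    · have hxa : a ≠ x := fun h => hl.1 (h ▸ hx')
      have hya : a ≠ y := fun h => hl.1 (h ▸ hy')
      simp [idxOf_cons_ne _ hxa, idxOf_cons_ne _ hya, sublist_cons_iff, hxa.symm, ih hl.2 hx' hy']

theorem exists_eq_append_singleton_of_length_eq_one_or_two (h : l.length = 1 ∨ l.length = 2) :
    ∃ l' a, l'.length ≤ 1 ∧ l = l' ++ [a] := by
  rcases h with h | h
  · obtain ⟨a, rfl⟩ := length_eq_one_iff.1 h
    exact ⟨[], a, by simp, rfl⟩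
  · obtain ⟨b, a, rfl⟩ := length_eq_two.1 h
    exact ⟨[b], a, by simp, rfl⟩

theorem head?_append_singleton_of_mem {a : α} (hl : l.length ≤ 1) (hx : x ∈ l) :
    (l ++ [a]).head? = some x := by
  rcases l with _ | ⟨b, _ | _⟩ <;> simp_all

end List

/-- Sublist form of `InvSet`. -/
def inversions {α : Type*} [LT α] (w : List α) : Set (α × α) :=
  {p | p.2 < p.1 ∧ [p.1, p.2] <+ w}

section WeakOrder

variable {u v w w' : List ℕ}

theorem AdjSwap.perm (h : AdjSwap w w') : w ~ w' := by
  obtain ⟨l, r, x, y, -, rfl, rfl⟩ := h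
  exact (Perm.swap y x r).append_left l

theorem AdjSwap.inversions_subset (h : AdjSwap w w') : inversions w ⊆ inversions w' := by
  obtain ⟨l, r, x, y, hxy, rfl, rfl⟩ := h
  rintro ⟨q, p⟩ ⟨hpq, h⟩
  refine ⟨hpq, ?_⟩
  rw [pair_sublist_append_iff] at h ⊢
  rcases h with h | ⟨hq, hp⟩ | h
  · exact .inl h
  · exact .inr (.inl ⟨hq, (Perm.swap y x r).subset hp⟩)
  · refine .inr (.inr (pair_sublist_swap_of_ne h ?_))
    rintro ⟨rfl, rfl⟩
    exact lt_asymm hxy hpq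

theorem WordWeakLe.perm (h : WordWeakLe u v) : u ~ v := by
  induction h with
  | refl => exact .refl _
  | tail _ h ih => exact ih.trans h.perm

theorem WordWeakLe.inversions_subset (h : WordWeakLe u v) : inversions u ⊆ inversions v := by
  induction h with
  | refl => exact subset_rfl
  | tail _ h ih => exact ih.trans h.inversions_subset

theorem WordWeakLe.cons (a : ℕ) (h : WordWeakLe u v) : WordWeakLe (a :: u) (a :: v) :=
  h.lift (a :: ·) fun _ _ ⟨l, r, x, y, hxy, hw, hw'⟩ =>
    ⟨a :: l, r, x, y, hxy, by simp [hw], by simp [hw']⟩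

theorem wordWeakLe_append_cons_of_forall_lt {m : ℕ} (l r : List ℕ) (hl : ∀ z ∈ l, z < m) :
    WordWeakLe (l ++ m :: r) (m :: (l ++ r)) := by
  induction l with
  | nil => exact .refl
  | cons z l ih =>
    refine ((ih fun z hz => hl z (mem_cons_of_mem _ hz)).cons z).tail ?_
    exact ⟨[], l ++ r, z, m, hl z mem_cons_self, rfl, rfl⟩

theorem wordWeakLe_iff (hv : v.Nodup) :
    WordWeakLe u v ↔ u ~ v ∧ inversions u ⊆ inversions v := by
  refine ⟨fun h => ⟨h.perm, h.inversions_subset⟩, ?_⟩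
  rintro ⟨hp, hinv⟩
  induction v generalizing u with
  | nil => rw [hp.eq_nil]; exact .refl
  | cons m v ih =>
    -- Move the first letter `m` of `v` to the front of `u`: every letter before it in `u` is
    -- smaller, for otherwise it would give an inversion of `u` that is missing from `v`.
    obtain ⟨l, r, rfl⟩ := append_of_mem (hp.symm.subset mem_cons_self)
    have hm : m ∉ l ++ r := (nodup_cons.1 (nodup_middle.1 (hp.nodup_iff.2 hv))).1
    have hmv : m ∉ v := (nodup_cons.1 hv).1
    have hlt : ∀ z ∈ l, z < m := by
      intro z hz
      by_contra! hmz
      have hzm : (z, m) ∈ inversions (l ++ m :: r) :=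
        ⟨hmz.lt_of_ne fun h => hm (h ▸ mem_append_left r hz),
          pair_sublist_append_iff.2 (.inr (.inl ⟨hz, mem_cons_self⟩))⟩
      exact hmv (singleton_sublist.1 (hinv hzm).2.tail)
    refine (wordWeakLe_append_cons_of_forall_lt l r hlt).trans
      ((ih (nodup_cons.1 hv).2 ?_ ?_).cons m)
    · exact (perm_middle.symm.trans hp).cons_inv
    · rintro ⟨q, p⟩ ⟨hpq, h⟩
      have hq : q ≠ m := fun hqm => hm (hqm ▸ h.subset mem_cons_self)
      have h' := (hinv ⟨hpq, h.trans ((sublist_cons_self m r).append_left l)⟩).2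
      obtain h' | ⟨_, ⟨rfl, -⟩, -⟩ := sublist_cons_iff.1 h'
      · exact ⟨hpq, h'⟩
      · exact absurd rfl hq

end WeakOrder

theorem forall_pair_sublist_iff_inversions_between {α : Type*} [LinearOrder α]
    {s : α → α → Prop} {u v w : List α} (hu_nd : u.Nodup) (hw : w.Nodup) (hwv : w ~ v)
    (hu : ∀ x y, s x y → [x, y] <+ u) (hv : ∀ x y, s x y → [x, y] <+ v)
    (hu_inv : ∀ x y, y < x → [x, y] <+ u → s x y)
    (hv_noninv : ∀ x y, x < y → [x, y] <+ v → s x y) :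
    (∀ x y, s x y → [x, y] <+ w) ↔
      inversions u ⊆ inversions w ∧ inversions w ⊆ inversions v := by
  constructor
  · intro h
    refine ⟨fun ⟨q, p⟩ ⟨hpq, hqp⟩ => ⟨hpq, h q p (hu_inv q p hpq hqp)⟩,
      fun ⟨q, p⟩ ⟨hpq, hqp⟩ => ⟨hpq, ?_⟩⟩
    refine (pair_sublist_or_pair_sublist (hwv.subset (hqp.subset (by simp)))
      (hwv.subset (hqp.subset (by simp))) hpq.ne').resolve_right fun hpq' => ?_
    exact hw.not_pair_sublist_swap hqp (h p q (hv_noninv p q hpq hpq'))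
  · rintro ⟨hinv_u, hinv_v⟩ x y hxy
    rcases lt_trichotomy x y with hlt | rfl | hlt
    · have hxy' := hv x y hxy
      refine (pair_sublist_or_pair_sublist (hwv.symm.subset (hxy'.subset (by simp)))
        (hwv.symm.subset (hxy'.subset (by simp))) hlt.ne).resolve_right fun hyx => ?_
      exact (hwv.nodup_iff.1 hw).not_pair_sublist_swap hxy'
        (hinv_v (show (y, x) ∈ inversions w from ⟨hlt, hyx⟩)).2
    · exact absurd (hu x x hxy) (nodup_iff_sublist.1 hu_nd x)
    · exact (hinv_u (show (x, y) ∈ inversions u from ⟨hlt, hu x y hxy⟩)).2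

/-- The strict order of `P_t`, peeling off the first column `c`: its bottom entry lies above
every other entry of `c :: t`. -/
def canoLt : List (List ℕ) → ℕ → ℕ → Prop
  | [], _, _ => False
  | c :: t, x, y => canoLt t x y ∨ (c.getLast? = some y ∧ x ∈ (c :: t).flatten ∧ x ≠ y)

section Tableau

variable {t : List (List ℕ)} {c : List ℕ} {x y : ℕ}

theorem canoLt.ne (h : canoLt t x y) : x ≠ y := by
  induction t with
  | nil => exact h.elim
  | cons c t ih => exact h.elim ih fun h => h.2.2

theorem canoLt.mem_flatten (h : canoLt t x y) : x ∈ t.flatten ∧ y ∈ t.flatten := by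
  induction t with
  | nil => exact h.elim
  | cons c t ih =>
    rcases h with h | ⟨hy, hx, -⟩
    · exact (ih h).imp (mem_append_right c) (mem_append_right c)
    · exact ⟨hx, mem_append_left _ (mem_of_getLast? hy)⟩

theorem minWord_cons : minWord (c :: t) = minWord t ++ c := by
  simp [minWord]

theorem maxWord_cons_append_singleton {a : ℕ} (hc : c.length ≤ 1) :
    maxWord ((c ++ [a]) :: t) = c ++ maxWord t ++ [a] := by
  rcases c with _ | ⟨b, _ | _⟩
  · simp [maxWord]
  · simp [maxWord]
  · simp at hc

theorem minWord_perm : minWord t ~ t.flatten := (reverse_perm t).flatten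

theorem maxWord_perm (hlen : ∀ c ∈ t, c.length = 1 ∨ c.length = 2) :
    maxWord t ~ t.flatten := by
  induction t with
  | nil => rfl
  | cons c t ih =>
    obtain ⟨c, a, hc, rfl⟩ :=
      exists_eq_append_singleton_of_length_eq_one_or_two (hlen _ mem_cons_self)
    rw [maxWord_cons_append_singleton hc, flatten_cons, append_assoc, append_assoc]
    have ih := ih fun c hc => hlen c (mem_cons_of_mem _ hc)
    exact (perm_append_comm.trans (ih.append_left [a])).append_left c

theorem canoLt.pair_sublist_minWord (h : canoLt t x y) : [x, y] <+ minWord t := by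
  induction t with
  | nil => exact h.elim
  | cons c t ih =>
    rw [minWord_cons]
    rcases h with h | ⟨hy, hx, hxy⟩
    · exact (ih h).trans (sublist_append_left _ _)
    · obtain ⟨c, rfl⟩ := getLast?_eq_some_iff.1 hy
      rw [← append_assoc, pair_sublist_append_iff]
      refine .inr (.inl ⟨?_, mem_singleton_self y⟩)
      simp only [flatten_cons, mem_append, mem_singleton] at hx
      simp only [mem_append, minWord_perm.mem_iff]
      tauto

theorem canoLt.pair_sublist_maxWord (hlen : ∀ c ∈ t, c.length = 1 ∨ c.length = 2)
    (h : canoLt t x y) : [x, y] <+ maxWord t := by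
  induction t with
  | nil => exact h.elim
  | cons c t ih =>
    have hlen' : ∀ c ∈ t, c.length = 1 ∨ c.length = 2 :=
      fun c hc => hlen c (mem_cons_of_mem _ hc)
    obtain ⟨c, a, hc, rfl⟩ :=
      exists_eq_append_singleton_of_length_eq_one_or_two (hlen _ mem_cons_self)
    rw [maxWord_cons_append_singleton hc]
    rcases h with h | ⟨hy, hx, hxy⟩
    · exact (ih hlen' h).trans ((sublist_append_right _ _).trans (sublist_append_left _ _))
    · obtain rfl : a = y := by simpa using hy
      rw [pair_sublist_append_iff]
      refine .inr (.inl ⟨?_, mem_singleton_self a⟩)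
      simp only [flatten_cons, mem_append, mem_singleton] at hx
      simp only [mem_append, (maxWord_perm hlen').mem_iff]
      tauto

theorem canoLt_of_pair_sublist_minWord (hlen : ∀ c ∈ t, c.length = 1 ∨ c.length = 2)
    (hdom : t.Pairwise fun c c' => ∀ a ∈ c.head?, ∀ z ∈ c', z < a)
    (hyx : y < x) (h : [x, y] <+ minWord t) : canoLt t x y := by
  induction t with
  | nil => simp [minWord] at h
  | cons c t ih =>
    obtain ⟨c, a, hc, rfl⟩ :=
      exists_eq_append_singleton_of_length_eq_one_or_two (hlen _ mem_cons_self)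
    obtain ⟨hhead, hdom⟩ := pairwise_cons.1 hdom
    rw [minWord_cons, ← append_assoc, pair_sublist_append_iff, pair_sublist_append_iff] at h
    rcases h with (h | ⟨hx, hy⟩ | h) | ⟨hx, hy⟩ | h
    · exact .inl (ih (fun c hc => hlen c (mem_cons_of_mem _ hc)) hdom h)
    · obtain ⟨c', hc', hxc'⟩ := mem_flatten.1 (minWord_perm.subset hx)
      exact absurd (hhead c' hc' y (head?_append_singleton_of_mem hc hy) x hxc') (lt_asymm hyx)
    · exact absurd h.length_le (by simp only [length_cons, length_nil]; omega)
    · obtain rfl : y = a := by simpa using hy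
      refine .inr ⟨by simp, ?_, hyx.ne'⟩
      simp only [flatten_cons, mem_append] at hx ⊢
      rcases hx with hx | hx
      · exact .inr (minWord_perm.subset hx)
      · exact .inl (.inl hx)
    · exact absurd h.length_le (by simp)

theorem canoLt_of_pair_sublist_maxWord (hlen : ∀ c ∈ t, c.length = 1 ∨ c.length = 2)
    (hdom : t.Pairwise fun c c' => ∀ a ∈ c.head?, ∀ z ∈ c', z < a)
    (hxy : x < y) (h : [x, y] <+ maxWord t) : canoLt t x y := by
  induction t with
  | nil => simp [maxWord] at h
  | cons c t ih =>
    have hlen' : ∀ c ∈ t, c.length = 1 ∨ c.length = 2 :=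
      fun c hc => hlen c (mem_cons_of_mem _ hc)
    obtain ⟨c, a, hc, rfl⟩ :=
      exists_eq_append_singleton_of_length_eq_one_or_two (hlen _ mem_cons_self)
    obtain ⟨hhead, hdom⟩ := pairwise_cons.1 hdom
    rw [maxWord_cons_append_singleton hc, pair_sublist_append_iff, pair_sublist_append_iff] at h
    rcases h with (h | ⟨hx, hy⟩ | h) | ⟨hx, hy⟩ | h
    · exact absurd h.length_le (by simp only [length_cons, length_nil]; omega)
    · obtain ⟨c', hc', hyc'⟩ := mem_flatten.1 ((maxWord_perm hlen').subset hy)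
      exact absurd (hhead c' hc' x (head?_append_singleton_of_mem hc hx) y hyc') (lt_asymm hxy)
    · exact .inl (ih hlen' hdom h)
    · obtain rfl : y = a := by simpa using hy
      refine .inr ⟨by simp, ?_, hxy.ne⟩
      simp only [flatten_cons, mem_append] at hx ⊢
      rcases hx with hx | hx
      · exact .inl (.inl hx)
      · exact .inr ((maxWord_perm hlen').subset hx)
    · exact absurd h.length_le (by simp)

theorem canoGen_cons {a : ℕ} (hc : c.getLast? = some a) :
    canoGen (c :: t) x y ↔ canoGen t x y ∨ (y = a ∧ (bottomRow t).head? = some x) ∨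
      (c.length = 2 ∧ c.head? = some x ∧ c.getLast? = some y) := by
  have hrow : ∀ B : List ℕ, (∃ i, i + 1 < (a :: B).length ∧ (a :: B).getD (i + 1) 0 = x ∧
      (a :: B).getD i 0 = y) ↔ (y = a ∧ B.head? = some x) ∨
      ∃ i, i + 1 < B.length ∧ B.getD (i + 1) 0 = x ∧ B.getD i 0 = y := by
    intro B
    rw [← Nat.or_exists_add_one]
    cases B <;> simp [eq_comm, and_comm]
  have hb : bottomRow (c :: t) = a :: bottomRow t := filterMap_cons_some hc
  unfold canoGen
  rw [hb, hrow]
  simp only [mem_cons, exists_eq_or_imp, or_assoc, or_comm, or_left_comm]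

theorem mem_flatten_of_mem_bottomRow (h : x ∈ bottomRow t) : x ∈ t.flatten := by
  obtain ⟨c, hc, hx⟩ := mem_filterMap.1 h
  exact mem_flatten.2 ⟨c, hc, mem_of_getLast? hx⟩

theorem canoLt_trans (hnd : t.flatten.Nodup) {z : ℕ} (hxy : canoLt t x y) (hyz : canoLt t y z) :
    canoLt t x z := by
  induction t with
  | nil => exact hxy.elim
  | cons c t ih =>
    rw [flatten_cons, nodup_append] at hnd
    obtain ⟨-, hnd, hdisj⟩ := hnd
    rcases hxy with hxy | ⟨hy, -, -⟩ <;> rcases hyz with hyz | ⟨hz, -, hyz'⟩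
    · exact .inl (ih hnd hxy hyz)
    · have hx := hxy.mem_flatten.1
      exact .inr ⟨hz, mem_append_right c hx, (hdisj z (mem_of_getLast? hz) x hx).symm⟩
    · exact absurd rfl (hdisj y (mem_of_getLast? hy) y hyz.mem_flatten.1)
    · exact absurd (Option.some.inj (hy.symm.trans hz)) hyz'

theorem canoLt_of_canoGen (hlen : ∀ c ∈ t, c.length = 1 ∨ c.length = 2)
    (hnd : t.flatten.Nodup) (h : canoGen t x y) : canoLt t x y := by
  induction t with
  | nil => simp [canoGen, bottomRow] at h
  | cons c t ih =>
    obtain ⟨c, a, hc, rfl⟩ :=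
      exists_eq_append_singleton_of_length_eq_one_or_two (hlen _ mem_cons_self)
    rw [flatten_cons, nodup_append] at hnd
    obtain ⟨hndc, hnd, hdisj⟩ := hnd
    have ha : (c ++ [a]).getLast? = some a := by simp
    rcases (canoGen_cons ha).1 h with h | ⟨rfl, hx⟩ | ⟨hlen2, hx, hy⟩
    · exact .inl (ih (fun c hc => hlen c (mem_cons_of_mem _ hc)) hnd h)
    · have hx := mem_flatten_of_mem_bottomRow (mem_of_head? hx)
      exact .inr ⟨ha, mem_append_right _ hx, (hdisj y (by simp) x hx).symm⟩
    · refine .inr ⟨hy, mem_append_left _ (mem_of_head? hx), ?_⟩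
      rcases c with _ | ⟨b, _ | _⟩ <;> simp_all

theorem canoLt.transGen (hlen : ∀ c ∈ t, c.length = 1 ∨ c.length = 2) (h : canoLt t x y) :
    Relation.TransGen (canoGen t) x y := by
  induction t generalizing x y with
  | nil => exact h.elim
  | cons c t ih =>
    have hlen' : ∀ c ∈ t, c.length = 1 ∨ c.length = 2 :=
      fun c hc => hlen c (mem_cons_of_mem _ hc)
    obtain ⟨c, a, hc, rfl⟩ :=
      exists_eq_append_singleton_of_length_eq_one_or_two (hlen _ mem_cons_self)
    have ha : (c ++ [a]).getLast? = some a := by simp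
    have hmono : canoGen t ≤ canoGen ((c ++ [a]) :: t) :=
      fun _ _ h => (canoGen_cons ha).2 (.inl h)
    rcases h with h | ⟨hy, hx, hxy⟩
    · exact Relation.TransGen.mono hmono _ _ (ih hlen' h)
    obtain rfl : y = a := by simpa using hy.symm
    rw [flatten_cons, mem_append, mem_append, mem_singleton] at hx
    rcases hx with (hx | rfl) | hx
    · refine .single ((canoGen_cons ha).2 (.inr (.inr ?_)))
      rcases c with _ | ⟨b, _ | _⟩ <;> simp_all
    · exact absurd rfl hxy
    · cases t with
      | nil => simp at hx
      | cons d t =>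
        obtain ⟨d, z, -, rfl⟩ :=
          exists_eq_append_singleton_of_length_eq_one_or_two (hlen' _ mem_cons_self)
        have hxz : Relation.ReflTransGen (canoGen ((d ++ [z]) :: t)) x z := by
          by_cases hxz : x = z
          · rw [hxz]
          · exact (ih hlen' (.inr ⟨by simp, hx, hxz⟩)).to_reflTransGen
        refine .tail' (Relation.ReflTransGen.mono hmono _ _ hxz)
          ((canoGen_cons ha).2 (.inr (.inl ⟨rfl, ?_⟩)))
        simp [bottomRow]

theorem transGen_canoGen_iff (hlen : ∀ c ∈ t, c.length = 1 ∨ c.length = 2)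
    (hnd : t.flatten.Nodup) : Relation.TransGen (canoGen t) x y ↔ canoLt t x y := by
  refine ⟨fun h => ?_, canoLt.transGen hlen⟩
  induction h with
  | single h => exact canoLt_of_canoGen hlen hnd h
  | tail _ h ih => exact canoLt_trans hnd ih (canoLt_of_canoGen hlen hnd h)

theorem isLinExt_iff (hlen : ∀ c ∈ t, c.length = 1 ∨ c.length = 2) (hnd : t.flatten.Nodup)
    {w : List ℕ} (hw : w.Nodup) (htw : t.flatten ⊆ w) :
    IsLinExt t w ↔ ∀ x y, canoLt t x y → [x, y] <+ w := by
  simp only [IsLinExt, Relation.reflTransGen_iff_eq_or_transGen, transGen_canoGen_iff hlen hnd]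
  refine ⟨fun h x y hxy => ?_, fun h x y hxy hne => ?_⟩
  · obtain ⟨hx, hy⟩ := hxy.mem_flatten
    exact (hw.pair_sublist_iff_idxOf_lt (htw hx) (htw hy)).2 (h x y (.inr hxy) hxy.ne)
  · obtain hxy := hxy.resolve_left hne.symm
    obtain ⟨hx, hy⟩ := hxy.mem_flatten
    exact (hw.pair_sublist_iff_idxOf_lt (htw hx) (htw hy)).1 (h x y hxy)

theorem IsYFT.pairwise_lt_head {n : ℕ} (ht : IsYFT n t) :
    t.Pairwise fun c c' => ∀ a ∈ c.head?, ∀ z ∈ c', z < a :=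
  pairwise_iff_getElem.2 fun i j hi hj hij => by
    have h := ht.2.2.1 i j hij hj
    rwa [getD_eq_getElem _ _ hi, getD_eq_getElem _ _ hj] at h

end Tableau

/-- the linear extensions of the canonical poset `P_t` form exactly
the interval `[min(t), max(t)]` of the weak order on `S_n`. -/
theorem linear_extensions_eq_weak_order_interval (n : ℕ) (t : List (List ℕ))
    (ht : IsYFT n t) (w : List ℕ) (hw : w.Perm (List.range' 1 n)) :
    IsLinExt t w ↔ WordWeakLe (minWord t) w ∧ WordWeakLe w (maxWord t) := by
  have hdom := ht.pairwise_lt_head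
  obtain ⟨hlen, -, -, ht_perm⟩ := ht
  have hwt : w ~ t.flatten := hw.trans ht_perm.symm
  have hw_nd : w.Nodup := hw.nodup_iff.2 nodup_range'
  have hnd : t.flatten.Nodup := hwt.nodup_iff.1 hw_nd
  have hmin : minWord t ~ w := minWord_perm.trans hwt.symm
  have hmax : w ~ maxWord t := hwt.trans (maxWord_perm hlen).symm
  rw [isLinExt_iff hlen hnd hw_nd hwt.symm.subset, wordWeakLe_iff hw_nd,
    wordWeakLe_iff (hmax.nodup_iff.1 hw_nd), and_iff_right hmin, and_iff_right hmax]
  exact forall_pair_sublist_iff_inversions_between (hmin.nodup_iff.2 hw_nd) hw_nd hmax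
    (fun _ _ => canoLt.pair_sublist_minWord) (fun _ _ => canoLt.pair_sublist_maxWord hlen)
    (fun _ _ => canoLt_of_pair_sublist_minWord hlen hdom)
    (fun _ _ => canoLt_of_pair_sublist_maxWord hlen hdom)
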